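/- arXiv:2206.02991 — 3 statements merged into one kernel-verified Lean document; each statement's English description precedes it below -/
import Mathlib

section
/- Let γ > 0, X ∈ ℝ^{m×n}, y, z ∈ ℝ^m. If (w̃, α̃) satisfies w̃ᵀw̃ + α̃² = 1 with α̃ ≠ 1, and w = (√γ/(1−α̃))·w̃, α = (1+α̃)/(1−α̃), then ‖(α·z + X·w)/(1+α) − y‖² = ‖(α̃/2)·z + (√γ/2)·X·w̃ − (y − z/2)‖². -/
/-! The two vectors inside the norms are already equal: with `α = (1 + α̃) / (1 - α̃)` one has
`(1 + α)⁻¹ = (1 - α̃) / 2`, which turns `α / (1 + α)` into `(1 + α̃) / 2` and `w / (1 + α)` into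
`(√γ / 2) w̃`. -/

open Matrix

theorem inv_one_add_div_one_sub {K : Type*} [Field K] {a : K} (ha : a ≠ 1) :
    (1 + (1 + a) / (1 - a))⁻¹ = (1 - a) / 2 := by
  have h : (1 : K) - a ≠ 0 := sub_ne_zero.mpr ha.symm
  rw [one_add_div h, inv_div]
  ring_nf

theorem inv_one_add_div_one_sub_smul_sub {K E : Type*} [Field K] [AddCommGroup E] [Module K E]
    {a : K} (ha : a ≠ 1) (c : K) (z v y : E) :
    (1 + (1 + a) / (1 - a))⁻¹ • (((1 + a) / (1 - a)) • z + (c / (1 - a)) • v) - y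
      = (a / 2) • z + (c / 2) • v - (y - (1 / 2 : K) • z) := by
  have h : (1 : K) - a ≠ 0 := sub_ne_zero.mpr ha.symm
  have cancel (b : K) : (1 - a) / 2 * (b / (1 - a)) = b / 2 := by
    rw [mul_comm, div_mul_div_cancel₀ h]
  rw [inv_one_add_div_one_sub ha, smul_add, smul_smul, smul_smul, cancel, cancel]
  module

theorem stmt_3_general (m n : ℕ) (γ : ℝ)
    (X : Matrix (Fin m) (Fin n) ℝ) (y z : Fin m → ℝ)
    (w' : Fin n → ℝ) (α' : ℝ)
    (hne : α' ≠ 1)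
    (w : Fin n → ℝ) (α : ℝ)
    (hw : w = (Real.sqrt γ / (1 - α')) • w')
    (hα : α = (1 + α') / (1 - α')) :
    ((1 + α)⁻¹ • (α • z + X.mulVec w) - y) ⬝ᵥ ((1 + α)⁻¹ • (α • z + X.mulVec w) - y)
      = ((α' / 2) • z + (Real.sqrt γ / 2) • X.mulVec w' - (y - (1 / 2 : ℝ) • z)) ⬝ᵥ
        ((α' / 2) • z + (Real.sqrt γ / 2) • X.mulVec w' - (y - (1 / 2 : ℝ) • z)) := by
  subst hw hα
  rw [mulVec_smul, inv_one_add_div_one_sub_smul_sub hne]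

theorem stmt_3 (m n : ℕ) (γ : ℝ) (hγ : 0 < γ)
    (X : Matrix (Fin m) (Fin n) ℝ) (y z : Fin m → ℝ)
    (w' : Fin n → ℝ) (α' : ℝ)
    (hsph : w' ⬝ᵥ w' + α' ^ 2 = 1) (hne : α' ≠ 1)
    (w : Fin n → ℝ) (α : ℝ)
    (hw : w = (Real.sqrt γ / (1 - α')) • w')
    (hα : α = (1 + α') / (1 - α')) :
    ((1 + α)⁻¹ • (α • z + X.mulVec w) - y) ⬝ᵥ ((1 + α)⁻¹ • (α • z + X.mulVec w) - y)
      = ((α' / 2) • z + (Real.sqrt γ / 2) • X.mulVec w' - (y - (1 / 2 : ℝ) • z)) ⬝ᵥ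
        ((α' / 2) • z + (Real.sqrt γ / 2) • X.mulVec w' - (y - (1 / 2 : ℝ) • z)) :=
  stmt_3_general m n γ X y z w' α' hne w α hw hα
end

section
/- If (w̃, α̃) is an ε-optimal solution of the SCLS with α̃ ≠ 1 (i.e. feasible with objective at most ṽ* + ε), then (w, α) with w = (√γ/(1−α̃))w̃, α = (1+α̃)/(1−α̃) is an ε-optimal solution of the QFP, provided the QFP attains its infimum. -/
/-!
The substitution `w = (√γ / (1 - α̃)) w̃`, `α = (1 + α̃) / (1 - α̃)` maps the unit sphere minus the
pole `α̃ = 1` onto the cone `wᵀw = γ α` (which forces `α ≥ 0`), with inverse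
`w̃ = (2 / ((1 + α) √γ)) w`, `α̃ = (α - 1) / (α + 1)`, and it carries the SCLS objective to the QFP
objective. Hence every QFP-feasible point is the image of an SCLS-feasible point with the same
value, and ε-optimality passes from the SCLS to the QFP.
-/

open Matrix

/-- QFP objective `v(w, α) = ‖(αz + Xw)/(1+α) − y‖²`. -/
noncomputable def qfpV {m n : ℕ} (X : Matrix (Fin m) (Fin n) ℝ) (y z : Fin m → ℝ)
    (w : Fin n → ℝ) (α : ℝ) : ℝ :=
  ((1 + α)⁻¹ • (α • z + X.mulVec w) - y) ⬝ᵥ ((1 + α)⁻¹ • (α • z + X.mulVec w) - y)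

/-- SCLS objective `ṽ(w̃, α̃) = ‖(α̃/2)z + (√γ/2)Xw̃ − (y − z/2)‖²`. -/
noncomputable def sclsV {m n : ℕ} (γ : ℝ) (X : Matrix (Fin m) (Fin n) ℝ) (y z : Fin m → ℝ)
    (w' : Fin n → ℝ) (α' : ℝ) : ℝ :=
  ((α' / 2) • z + (Real.sqrt γ / 2) • X.mulVec w' - (y - (1 / 2 : ℝ) • z)) ⬝ᵥ
    ((α' / 2) • z + (Real.sqrt γ / 2) • X.mulVec w' - (y - (1 / 2 : ℝ) • z))

lemma nonneg_of_dotProduct_self_eq_mul {ι : Type*} [Fintype ι] {γ a : ℝ} (hγ : 0 < γ)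
    {w : ι → ℝ} (hw : w ⬝ᵥ w = γ * a) : 0 ≤ a := by
  have hnn : 0 ≤ w ⬝ᵥ w := Finset.sum_nonneg fun i _ => mul_self_nonneg (w i)
  exact nonneg_of_mul_nonneg_right (hw ▸ hnn) hγ

lemma dotProduct_sphereToCone {ι : Type*} [Fintype ι] {γ α' : ℝ} (hγ : 0 ≤ γ)
    {w' : ι → ℝ} (hsph : w' ⬝ᵥ w' + α' ^ 2 = 1) (hne : α' ≠ 1) :
    ((Real.sqrt γ / (1 - α')) • w') ⬝ᵥ ((Real.sqrt γ / (1 - α')) • w')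
      = γ * ((1 + α') / (1 - α')) := by
  have hne' : 1 - α' ≠ 0 := sub_ne_zero.mpr hne.symm
  have hw : w' ⬝ᵥ w' = 1 - α' ^ 2 := by linarith
  rw [smul_dotProduct, dotProduct_smul, smul_eq_mul, smul_eq_mul, hw]
  field_simp
  linear_combination (1 - α' ^ 2) * Real.mul_self_sqrt hγ

lemma dotProduct_coneToSphere {ι : Type*} [Fintype ι] {γ α : ℝ} (hγ : 0 < γ)
    {w : ι → ℝ} (hcone : w ⬝ᵥ w = γ * α) :
    ((2 / ((1 + α) * Real.sqrt γ)) • w) ⬝ᵥ ((2 / ((1 + α) * Real.sqrt γ)) • w)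
      + ((α - 1) / (α + 1)) ^ 2 = 1 := by
  have hα := nonneg_of_dotProduct_self_eq_mul hγ hcone
  have hs : Real.sqrt γ ≠ 0 := by positivity
  have hα1 : α + 1 ≠ 0 := by positivity
  rw [smul_dotProduct, dotProduct_smul, smul_eq_mul, smul_eq_mul, hcone]
  field_simp
  linear_combination -4 * α * (1 + α) ^ 2 * Real.mul_self_sqrt hγ.le

variable {m n : ℕ} (X : Matrix (Fin m) (Fin n) ℝ) (y z : Fin m → ℝ)

lemma qfpV_sphereToCone (γ : ℝ) (w' : Fin n → ℝ) {α' : ℝ} (hne : α' ≠ 1) :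
    qfpV X y z ((Real.sqrt γ / (1 - α')) • w') ((1 + α') / (1 - α')) = sclsV γ X y z w' α' := by
  have hne' : 1 - α' ≠ 0 := sub_ne_zero.mpr hne.symm
  have htwo : 1 + (1 + α') / (1 - α') = 2 / (1 - α') := by field_simp; ring
  unfold qfpV sclsV
  congr 1 <;>
  · rw [htwo, mulVec_smul]
    funext i
    simp only [Pi.add_apply, Pi.sub_apply, Pi.smul_apply, smul_eq_mul]
    field_simp
    ring

lemma sclsV_coneToSphere {γ : ℝ} (hγ : 0 < γ) (w : Fin n → ℝ) {α : ℝ} (hα : 0 ≤ α) :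
    sclsV γ X y z ((2 / ((1 + α) * Real.sqrt γ)) • w) ((α - 1) / (α + 1)) = qfpV X y z w α := by
  have hs : Real.sqrt γ ≠ 0 := by positivity
  have hα1 : α + 1 ≠ 0 := by positivity
  unfold qfpV sclsV
  congr 1 <;>
  · rw [mulVec_smul]
    funext i
    simp only [Pi.add_apply, Pi.sub_apply, Pi.smul_apply, smul_eq_mul]
    field_simp
    ring

theorem stmt_8_general (m n : ℕ) (γ : ℝ) (hγ : 0 < γ) (ε : ℝ)
    (X : Matrix (Fin m) (Fin n) ℝ) (y z : Fin m → ℝ)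
    (w' : Fin n → ℝ) (α' : ℝ)
    (hsph : w' ⬝ᵥ w' + α' ^ 2 = 1) (hne : α' ≠ 1)
    (hepsopt : ∀ (w₁ : Fin n → ℝ) (α₁ : ℝ), w₁ ⬝ᵥ w₁ + α₁ ^ 2 = 1 →
      sclsV γ X y z w' α' ≤ sclsV γ X y z w₁ α₁ + ε) :
    ((Real.sqrt γ / (1 - α')) • w') ⬝ᵥ ((Real.sqrt γ / (1 - α')) • w')
        = γ * ((1 + α') / (1 - α')) ∧
      ∀ (w₁ : Fin n → ℝ) (α₁ : ℝ), w₁ ⬝ᵥ w₁ = γ * α₁ →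
        qfpV X y z ((Real.sqrt γ / (1 - α')) • w') ((1 + α') / (1 - α'))
          ≤ qfpV X y z w₁ α₁ + ε := by
  refine ⟨dotProduct_sphereToCone hγ.le hsph hne, fun w₁ α₁ hcone => ?_⟩
  have hα₁ := nonneg_of_dotProduct_self_eq_mul hγ hcone
  rw [qfpV_sphereToCone X y z γ w' hne, ← sclsV_coneToSphere X y z hγ w₁ hα₁]
  exact hepsopt _ _ (dotProduct_coneToSphere hγ hcone)

theorem stmt_8 (m n : ℕ) (γ : ℝ) (hγ : 0 < γ) (ε : ℝ) (hε : 0 ≤ ε)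
    (X : Matrix (Fin m) (Fin n) ℝ) (y z : Fin m → ℝ)
    (hQFP : ∃ (w : Fin n → ℝ) (α : ℝ), w ⬝ᵥ w = γ * α ∧
      ∀ (w₁ : Fin n → ℝ) (α₁ : ℝ), w₁ ⬝ᵥ w₁ = γ * α₁ →
        qfpV X y z w α ≤ qfpV X y z w₁ α₁)
    (w' : Fin n → ℝ) (α' : ℝ)
    (hsph : w' ⬝ᵥ w' + α' ^ 2 = 1) (hne : α' ≠ 1)
    (hepsopt : ∀ (w₁ : Fin n → ℝ) (α₁ : ℝ), w₁ ⬝ᵥ w₁ + α₁ ^ 2 = 1 →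
      sclsV γ X y z w' α' ≤ sclsV γ X y z w₁ α₁ + ε) :
    ((Real.sqrt γ / (1 - α')) • w') ⬝ᵥ ((Real.sqrt γ / (1 - α')) • w')
        = γ * ((1 + α') / (1 - α')) ∧
      ∀ (w₁ : Fin n → ℝ) (α₁ : ℝ), w₁ ⬝ᵥ w₁ = γ * α₁ →
        qfpV X y z ((Real.sqrt γ / (1 - α')) • w') ((1 + α') / (1 - α'))
          ≤ qfpV X y z w₁ α₁ + ε :=
  stmt_8_general m n γ hγ ε X y z w' α' hsph hne hepsopt
end

section
/- Let H be a symmetric matrix, g a vector, and suppose r* with ‖r*‖ = 1 and multiplier λ* satisfy (H + λ*I)r* = −g and H + λ*I ⪰ 0. If ‖(H − λ_min(H)I)† g‖ > 1, then λ* > −λ_min(H), i.e. H + λ*I is positive definite. -/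
open Matrix
open scoped ComplexOrder

/-!
Testing the positive semidefiniteness of `H + λ* I` on a unit eigenvector for `λ_min(H)` gives
`λ* ≥ -λ_min(H)`. In the case of equality `r*` itself solves `(H - λ_min(H) I) u = -g` with
`‖u‖ = 1`, which the hypothesis on the pseudoinverse solution excludes.
-/

namespace Matrix.IsHermitian

variable {𝕜 ι : Type*} [RCLike 𝕜] [Fintype ι] [DecidableEq ι] {A : Matrix ι ι 𝕜}

lemma eigenvalues_add_nonneg_of_posSemidef (hA : A.IsHermitian) {c : ℝ}
    (hc : (A + c • (1 : Matrix ι ι 𝕜)).PosSemidef) (i : ι) : 0 ≤ hA.eigenvalues i + c := by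
  set v : ι → 𝕜 := ⇑(hA.eigenvectorBasis i)
  have hv : star v ⬝ᵥ v = 1 := by
    rw [dotProduct_comm, ← EuclideanSpace.inner_eq_star_dotProduct]
    exact inner_self_eq_one_of_norm_eq_one (hA.eigenvectorBasis.orthonormal.1 i)
  have := hc.re_dotProduct_nonneg v
  rwa [add_mulVec, dotProduct_add, map_add, ← hA.eigenvalues_eq, smul_mulVec, one_mulVec,
    dotProduct_smul, hv, RCLike.smul_re, RCLike.one_re, mul_one] at this

lemma neg_le_of_posSemidef_add_smul_one [Nonempty ι] (hA : A.IsHermitian) {c : ℝ}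
    (hc : (A + c • (1 : Matrix ι ι 𝕜)).PosSemidef) : -(⨅ i, hA.eigenvalues i) ≤ c :=
  neg_le.mpr <| le_ciInf fun i ↦ by linarith [hA.eigenvalues_add_nonneg_of_posSemidef hc i]

end Matrix.IsHermitian

theorem stmt_10 (n : ℕ) (H : Matrix (Fin (n + 1)) (Fin (n + 1)) ℝ)
    (hH : H.IsHermitian) (g r : Fin (n + 1) → ℝ) (lam : ℝ)
    (heq : H.mulVec r + lam • r = -g)
    (hpsd : (H + lam • (1 : Matrix (Fin (n + 1)) (Fin (n + 1)) ℝ)).PosSemidef)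
    (hnorm : r ⬝ᵥ r = 1)
    -- `‖(H − λ_min(H) I)† g‖ > 1`: every solution `u` of `(H − λ_min I) u = −g`
    -- (the Moore–Penrose solution being the minimum-norm one) has norm greater than 1
    (hpinv : ∀ u : Fin (n + 1) → ℝ,
      (H - (⨅ i, hH.eigenvalues i) • (1 : Matrix (Fin (n + 1)) (Fin (n + 1)) ℝ)).mulVec u = -g →
        1 < u ⬝ᵥ u) :
    -(⨅ i, hH.eigenvalues i) < lam := by
  refine (hH.neg_le_of_posSemidef_add_smul_one hpsd).lt_of_ne fun hlam ↦ ?_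
  subst hlam
  have hr : (H - (⨅ i, hH.eigenvalues i) • (1 : Matrix _ _ ℝ)) *ᵥ r = -g := by
    rw [sub_mulVec, smul_mulVec, one_mulVec, ← heq, neg_smul, sub_eq_add_neg]
  exact (hpinv r hr).ne' hnorm
end
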